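/- arXiv:1607.06982 — 5 statements merged into one kernel-verified Lean document; each statement's English description precedes it below -/
import Mathlib

section
/- For any integer m ≥ 1, variable x, and sequence a = (a_1, a_2, ...), the coefficient of t^m in (1/(1-tx)) · ∏_{j=1}^{m}(1+t·a_j) equals the factorial power (x|a)^m = (x+a_1)(x+a_2)···(x+a_m). -/
open PowerSeries Finset

noncomputable section

/-- `geom x` is the formal power series `1/(1-tx) = ∑ xⁿ tⁿ`. -/
def geom {R : Type*} [CommRing R] (x : R) : PowerSeries R := PowerSeries.mk fun n => x ^ n

/-- `lin a` is the formal power series `1 + t·a`. -/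
def lin {R : Type*} [CommRing R] (a : R) : PowerSeries R :=
  1 + PowerSeries.C a * PowerSeries.X

/-- Factorial power `(x|a)^m = (x+a₁)(x+a₂)···(x+a_m)`. -/
def factPow {R : Type*} [CommRing R] (x : R) (a : ℕ → R) (m : ℕ) : R :=
  ∏ k ∈ Finset.range m, (x + a (k + 1))

/-!
Multiplying a series by `1 + t c` replaces its coefficients `cₙ` by `cₙ + c cₙ₋₁`. The
coefficients of `1/(1-tx)` are `xⁿ`, and by induction on the number of factors the coefficients of
`1/(1-tx) ∏_{i ∈ s} (1 + t bᵢ)` are `x^(n-|s|) ∏_{i ∈ s} (x + bᵢ)` from `n = |s|` on, since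
`x^(n-|s|) P + c x^(n-1-|s|) P = x^(n-1-|s|) (x + c) P`.
-/

section

variable {R : Type*} [CommRing R]

lemma coeff_geom (x : R) (n : ℕ) : coeff n (geom x) = x ^ n := by
  simp [geom]

lemma coeff_succ_mul_lin (f : PowerSeries R) (c : R) (n : ℕ) :
    coeff (n + 1) (f * lin c) = coeff (n + 1) f + c * coeff n f := by
  rw [lin, mul_add, mul_one, map_add, mul_left_comm, coeff_C_mul, coeff_succ_mul_X]

theorem coeff_geom_mul_prod_lin {ι : Type*} [DecidableEq ι] (x : R) (b : ι → R) (s : Finset ι)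
    {n : ℕ} (hn : #s ≤ n) :
    coeff n (geom x * ∏ i ∈ s, lin (b i)) = x ^ (n - #s) * ∏ i ∈ s, (x + b i) := by
  induction s using Finset.induction_on generalizing n with
  | empty => simp [coeff_geom]
  | insert i s hi ih =>
    rw [card_insert_of_notMem hi] at hn ⊢
    obtain ⟨n, rfl⟩ := Nat.exists_eq_add_of_le' (Nat.one_le_of_lt hn)
    have hsn : #s ≤ n := by omega
    obtain ⟨k, rfl⟩ := Nat.exists_eq_add_of_le hsn
    rw [prod_insert hi, prod_insert hi, mul_left_comm, mul_comm (lin _), coeff_succ_mul_lin,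
      ih (by omega), ih hsn]
    simp only [Nat.add_sub_cancel_left, show #s + k + 1 - #s = k + 1 by omega,
      show #s + k + 1 - (#s + 1) = k by omega]
    ring

end

theorem stmt0_general {R : Type*} [CommRing R] (x : R) (a : ℕ → R) (m : ℕ) :
    PowerSeries.coeff m (geom x * ∏ j ∈ Finset.range m, lin (a (j + 1))) =
      factPow x a m := by
  simpa [factPow] using coeff_geom_mul_prod_lin x (fun j => a (j + 1)) (range m) (card_range m).le

/-- Coefficient of tᵐ in (1/(1-tx))·∏_{j=1}^m (1+t aⱼ) equals the factorial power (x|a)^m. -/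
theorem stmt0 {R : Type*} [CommRing R] (x : R) (a : ℕ → R) (m : ℕ) (hm : 1 ≤ m) :
    PowerSeries.coeff m (geom x * ∏ j ∈ Finset.range m, lin (a (j + 1))) =
      factPow x a m :=
  stmt0_general x a m
end
end

section
/- For any integer m ≥ 0, invertible variable x with square root x^{1/2} and x̄ = x^{-1}, and sequence a, the coefficient of t^m in (1+t)/((1-tx)(1-tx̄)) · ∏_{j=1}^{m}(1+t·a_j) equals (x^{1/2}·(x|a)^m − x̄^{1/2}·(x̄|a)^m)/(x^{1/2} − x̄^{1/2}). -/
open PowerSeries Finset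

noncomputable section

/-! The partial fraction decomposition
`(1+t)/((1-ts²)(1-ts⁻²)) = (s/(1-ts²) - s⁻¹/(1-ts⁻²))/(s - s⁻¹)` reduces the claim to
`[tᵐ] ∏ⱼ(1+taⱼ)/(1-tx) = (x|a)^m`, which follows by induction on `m`: multiplying by
`1 + t a_{m+1}` sends the coefficient sequence `xⁿ (x|a)^m` of `tᵐ⁺ⁿ` to
`xⁿ⁺¹ (x|a)^m + a_{m+1} xⁿ (x|a)^m = xⁿ (x|a)^{m+1}`. -/

section

variable {R : Type*} [CommRing R]

lemma one_sub_C_mul_X_mul_geom (x : R) : (1 - C x * X) * geom x = 1 := by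
  ext n
  cases n with
  | zero => simp [geom]
  | succ k =>
    rw [sub_mul, one_mul, map_sub, mul_assoc, coeff_C_mul, coeff_succ_X_mul, geom]
    simp [pow_succ, mul_comm]

lemma coeff_add_geom_mul_prod_lin (x : R) (a : ℕ → R) (m n : ℕ) :
    coeff (m + n) (geom x * ∏ j ∈ range m, lin (a (j + 1))) = x ^ n * factPow x a m := by
  induction m generalizing n with
  | zero => simp [geom, factPow]
  | succ m ih =>
    set P := geom x * ∏ j ∈ range m, lin (a (j + 1))
    have hP : geom x * ∏ j ∈ range (m + 1), lin (a (j + 1)) = P + P * C (a (m + 1)) * X := by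
      rw [prod_range_succ, lin]; ring
    rw [hP, map_add, show m + 1 + n = m + n + 1 by ring, coeff_succ_mul_X, coeff_mul_C,
      add_assoc, ih, ih, factPow, factPow, prod_range_succ, pow_succ]
    ring

lemma coeff_geom_mul_prod_lin_s2 (x : R) (a : ℕ → R) (m : ℕ) :
    coeff m (geom x * ∏ j ∈ range m, lin (a (j + 1))) = factPow x a m := by
  simpa using coeff_add_geom_mul_prod_lin x a m 0

lemma C_sub_mul_one_add_X_mul_geom_mul_geom {s t : R} (hst : s * t = 1) :
    C (s - t) * ((1 + X) * geom (s ^ 2) * geom (t ^ 2)) =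
      C s * geom (s ^ 2) - C t * geom (t ^ 2) := by
  have hx := one_sub_C_mul_X_mul_geom (s ^ 2)
  have hy := one_sub_C_mul_X_mul_geom (t ^ 2)
  have hC : (C s : R⟦X⟧) * C t = 1 := by rw [← map_mul, hst, map_one]
  simp only [map_pow, map_sub] at hx hy ⊢
  linear_combination C s * geom (s ^ 2) * hy - C t * geom (t ^ 2) * hx
    - geom (s ^ 2) * geom (t ^ 2) * X * (C s - C t) * hC

end

theorem stmt2_general {K : Type*} [Field K] (x s : K) (a : ℕ → K) (m : ℕ)
    (hs : s ^ 2 = x) (hss : s ≠ s⁻¹) :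
    PowerSeries.coeff m ((1 + PowerSeries.X) * geom x * geom x⁻¹ *
        ∏ j ∈ Finset.range m, lin (a (j + 1))) =
      (s * factPow x a m - s⁻¹ * factPow x⁻¹ a m) / (s - s⁻¹) := by
  have hs0 : s ≠ 0 := by rintro rfl; simp at hss
  subst hs
  have hpf := C_sub_mul_one_add_X_mul_geom_mul_geom (mul_inv_cancel₀ hs0)
  rw [← inv_pow, eq_div_iff (sub_ne_zero.mpr hss), mul_comm, ← coeff_C_mul, ← mul_assoc, hpf,
    sub_mul, map_sub, mul_assoc, mul_assoc, coeff_C_mul, coeff_C_mul, coeff_geom_mul_prod_lin_s2,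
    coeff_geom_mul_prod_lin_s2]

/-- Coefficient of tᵐ in (1+t)/((1-tx)(1-tx̄))·∏_{j=1}^m (1+t aⱼ)
equals (x^{1/2}(x|a)^m − x̄^{1/2}(x̄|a)^m)/(x^{1/2}−x̄^{1/2}), where s = x^{1/2}
and s⁻¹ = x̄^{1/2}. -/
theorem stmt2 {K : Type*} [Field K] (x s : K) (a : ℕ → K) (m : ℕ)
    (hx : x ≠ 0) (hs : s ^ 2 = x) (hss : s ≠ s⁻¹) :
    PowerSeries.coeff m ((1 + PowerSeries.X) * geom x * geom x⁻¹ *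
        ∏ j ∈ Finset.range m, lin (a (j + 1))) =
      (s * factPow x a m - s⁻¹ * factPow x⁻¹ a m) / (s - s⁻¹) :=
  stmt2_general x s a m hs hss
end
end

section
/- The n×n determinant det(h_{n-j}(x_i | a))_{1≤i,j≤n}, where h_m(x|a) = (x|a)^m = (x+a_1)···(x+a_m) is the one-variable factorial power, equals the Vandermonde product ∏_{1≤i<j≤n}(x_i − x_j). -/
/-! The entry `(x_i|a)^{n-1-j}` is the value at `x_i` of the monic polynomial `(X|a)^{n-1-j}` of
degree `n-1-j`. Hence the matrix is the descending Vandermonde matrix `(x_i^{n-1-j})` times a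
unitriangular matrix of coefficients, and the descending Vandermonde determinant is the projective
Vandermonde determinant `det(v_i^j w_i^{n-1-j}) = ∏_{i<j} (v_j w_i - v_i w_j)` at `v = 1`, `w = x`. -/

open PowerSeries Finset

noncomputable section

namespace Matrix

variable {R : Type*} [CommRing R] {n : ℕ}

theorem det_of_pow_rev_eq_prod_sub (x : Fin n → R) :
    (of fun i j : Fin n => x i ^ (j.rev : ℕ)).det = ∏ i : Fin n, ∏ j ∈ Ioi i, (x i - x j) := by
  simpa [projVandermonde, rectVandermonde] using det_projVandermonde 1 x

theorem det_of_eval_rev_eq_prod_sub (x : Fin n → R) (p : Fin n → Polynomial R)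
    (h_deg : ∀ i, (p i).natDegree = i) (h_monic : ∀ i, (p i).Monic) :
    (of fun i j : Fin n => (p j.rev).eval (x i)).det = ∏ i : Fin n, ∏ j ∈ Ioi i, (x i - x j) := by
  have h_factor := eval_matrixOfPolynomials_eq_vandermonde_mul_matrixOfPolynomials x p
    fun i => (h_deg i).le
  calc (of fun i j : Fin n => (p j.rev).eval (x i)).det
      = ((of fun i j : Fin n => (p j).eval (x i)).submatrix id Fin.revPerm).det := rfl
    _ = (of fun i j : Fin n => x i ^ (j.rev : ℕ)).det *
          ((of fun i j : Fin n => (p j).coeff i).submatrix Fin.revPerm Fin.revPerm).det := by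
        rw [h_factor, submatrix_mul _ _ _ _ _ Fin.revPerm.bijective, det_mul]
        rfl
    _ = ∏ i : Fin n, ∏ j ∈ Ioi i, (x i - x j) := by
        rw [det_submatrix_equiv_self, det_matrixOfPolynomials p h_deg h_monic, mul_one,
          det_of_pow_rev_eq_prod_sub]

end Matrix

section FactorialPower

open Polynomial

variable {R : Type*} [CommRing R]

def factPowPoly (a : ℕ → R) (m : ℕ) : R[X] :=
  ∏ k ∈ range m, (Polynomial.X + Polynomial.C (a (k + 1)))

theorem monic_factPowPoly (a : ℕ → R) (m : ℕ) : (factPowPoly a m).Monic :=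
  monic_prod_of_monic _ _ fun _ _ => monic_X_add_C _

theorem natDegree_factPowPoly [Nontrivial R] (a : ℕ → R) (m : ℕ) :
    (factPowPoly a m).natDegree = m := by
  rw [factPowPoly, natDegree_prod_of_monic _ _ fun _ _ => monic_X_add_C _]
  simp only [natDegree_X_add_C, sum_const, card_range, smul_eq_mul, mul_one]

theorem eval_factPowPoly (a : ℕ → R) (m : ℕ) (y : R) :
    (factPowPoly a m).eval y = factPow y a m := by
  simp [factPowPoly, factPow, eval_prod]

end FactorialPower

/-- The determinant det((x_i|a)^{n-j}) equals the Vandermonde product ∏_{i<j}(x_i−x_j). -/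
theorem stmt6 {R : Type*} [CommRing R] (n : ℕ) (x : Fin n → R) (a : ℕ → R) :
    Matrix.det (Matrix.of fun i j : Fin n => factPow (x i) a (n - 1 - (j : ℕ))) =
      ∏ i : Fin n, ∏ j ∈ Finset.Ioi i, (x i - x j) := by
  nontriviality R
  have h_entries : (Matrix.of fun i j : Fin n => factPow (x i) a (n - 1 - (j : ℕ))) =
      Matrix.of fun i j : Fin n => (factPowPoly a j.rev).eval (x i) := by
    ext i j
    rw [Matrix.of_apply, Matrix.of_apply, eval_factPowPoly, Fin.val_rev, Nat.sub_sub, add_comm]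
  rw [h_entries, Matrix.det_of_eval_rev_eq_prod_sub x _
    (fun i => natDegree_factPowPoly a i) (fun i => monic_factPowPoly a i)]

end
end

section
/- For n variables x = (x_1,...,x_n) and factorial parameters a, the factorial complete homogeneous function h_m(x|a), defined as the coefficient of t^m in ∏_{i=1}^n 1/(1-t x_i) · ∏_{j=1}^{m+n-1}(1+t a_j), satisfies the recursion h_m(x|a) = h_m(x'|a) + (x_n + a_{m+n-1})·h_{m-1}(x|a), where x' = (x_1,...,x_{n-1}). -/
open PowerSeries Finset

noncomputable section

/-
Multiplying by `1 + a t` shifts coefficients: `[t^{k+1}](P·(1 + a t)) = [t^{k+1}]P + a·[t^k]P`,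
and since `1/(1 - y t) = 1 + y t · 1/(1 - y t)`, similarly
`[t^{k+1}](P/(1 - y t)) = [t^{k+1}]P + y·[t^k](P/(1 - y t))`.
Peeling off the factor `1 + a_{m+n-1} t` and then the factor `1/(1 - x_n t)` from the generating
function of `h_m(x|a)` yields the two terms `x_n·h_{m-1}(x|a)` and `a_{m+n-1}·h_{m-1}(x|a)`
together with `h_m(x'|a)`.
-/

theorem geom_eq_one_add_C_mul_X_mul_geom {R : Type*} [CommRing R] (y : R) :
    geom y = 1 + C y * X * geom y := by
  ext (_ | k)
  · simp [geom]
  · rw [mul_assoc]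
    simp [geom, coeff_succ_X_mul, pow_succ, mul_comm]

theorem coeff_succ_mul_lin_s7 {R : Type*} [CommRing R] (P : R⟦X⟧) (a : R) (k : ℕ) :
    coeff (k + 1) (P * lin a) = coeff (k + 1) P + a * coeff k P := by
  rw [lin, mul_add, mul_one, map_add, mul_left_comm, coeff_C_mul, coeff_succ_mul_X]

theorem coeff_succ_mul_geom {R : Type*} [CommRing R] (P : R⟦X⟧) (y : R) (k : ℕ) :
    coeff (k + 1) (P * geom y) = coeff (k + 1) P + y * coeff k (P * geom y) := by
  conv_lhs => rw [geom_eq_one_add_C_mul_X_mul_geom y]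
  rw [mul_add, mul_one, map_add, show P * (C y * X * geom y) = C y * (X * (P * geom y)) by ring,
    coeff_C_mul, coeff_succ_X_mul]

/-- Recursion hₘ(x|a) = hₘ(x'|a) + (x_n + a_{m+n-1})·h_{m-1}(x|a), x' = (x₁,…,x_{n-1}). -/
theorem stmt7 {R : Type*} [CommRing R] (n m : ℕ) (hn : 1 ≤ n) (hm : 1 ≤ m) (x a : ℕ → R) :
    PowerSeries.coeff m ((∏ i ∈ Finset.Icc 1 n, geom (x i)) *
        ∏ k ∈ Finset.range (m + n - 1), lin (a (k + 1))) =
    PowerSeries.coeff m ((∏ i ∈ Finset.Icc 1 (n - 1), geom (x i)) *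
        ∏ k ∈ Finset.range (m + n - 2), lin (a (k + 1))) +
    (x n + a (m + n - 1)) * PowerSeries.coeff (m - 1)
      ((∏ i ∈ Finset.Icc 1 n, geom (x i)) *
        ∏ k ∈ Finset.range (m + n - 2), lin (a (k + 1))) := by
  obtain ⟨q, rfl⟩ : ∃ q, m = q + 1 := ⟨m - 1, by omega⟩
  obtain ⟨p, rfl⟩ : ∃ p, n = p + 1 := ⟨n - 1, by omega⟩
  simp only [show q + 1 + (p + 1) - 1 = q + p + 1 by omega,
    show q + 1 + (p + 1) - 2 = q + p by omega, Nat.add_sub_cancel, prod_range_succ,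
    prod_Icc_succ_top (Nat.le_add_left 1 p)]
  set G := ∏ i ∈ Icc 1 p, geom (x i)
  set L := ∏ k ∈ range (q + p), lin (a (k + 1))
  rw [show G * geom (x (p + 1)) * (L * lin (a (q + p + 1)))
      = G * L * geom (x (p + 1)) * lin (a (q + p + 1)) by ring,
    coeff_succ_mul_lin_s7, coeff_succ_mul_geom, show G * geom (x (p + 1)) * L
      = G * L * geom (x (p + 1)) by ring]
  ring
end
end

section
/- Flagged factorial Jacobi–Trudi identity for factorial symplectic characters: with h^{sp}_m as in the definition below, det(x_i(x_i|a)^{λ_j+n-j} − x̄_i(x̄_i|a)^{λ_j+n-j})_{1≤i,j≤n} = ∏_{i=1}^n (x_i − x̄_i) · ∏_{1≤i<j≤n}(x_i − x_j)(1 − x̄_i x̄_j) · det(h^{sp}_{λ_j−j+i}(x^{(i)}, x̄^{(i)}|a))_{1≤i,j≤n}. -/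
open PowerSeries Finset

noncomputable section

/-- Flagged factorial complete function h_m(x_p,…,x_q | a), zero for m < 0. -/
def hfun {R : Type*} [CommRing R] (x a : ℕ → R) (p q : ℕ) (m : ℤ) : R :=
  if m < 0 then 0 else
    PowerSeries.coeff m.toNat ((∏ ℓ ∈ Finset.Icc p q, geom (x ℓ)) *
      ∏ k ∈ Finset.range (m.toNat + q - p), lin (a (k + 1)))

/-- Symplectic flagged factorial complete function h^{sp}_m(x_p,x̄_p,…,x_q,x̄_q | a). -/
def hsp {R : Type*} [CommRing R] (x xb a : ℕ → R) (p q : ℕ) (m : ℤ) : R :=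
  if m < 0 then 0 else
    PowerSeries.coeff m.toNat ((∏ ℓ ∈ Finset.Icc p q, geom (x ℓ) * geom (xb ℓ)) *
      ∏ k ∈ Finset.range (m.toNat + q - p), lin (a (k + 1)))

/-!
Put `G_r = 1/((1 - x_r t)(1 - x̄_r t))`. The entry `x (x|a)^m - x̄ (x̄|a)^m` is `x - x̄` times the
coefficient of `t^m` in `G · ∏_{k ≤ m} (1 + a_k t)`. Since `x_r x̄_r = 1`, the denominators
`1/G_r = 1 - (x_r + x̄_r) t + t²` differ from one another by multiples of `t`, so a telescoping
expansion writes `G_p` as a combination of the `t^{n-k} G_k ⋯ G_n` with `p ≤ k ≤ n`. Reading off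
coefficients factors the matrix on the left as an upper triangular matrix times the matrix of the
`h^{sp}`. Its diagonal entries are `(x_i - x̄_i) ∏_{j>i} (x_i + x̄_i - x_j - x̄_j)`, and
`x_i + x̄_i - x_j - x̄_j = (x_i - x_j)(1 - x̄_i x̄_j)`.
-/

namespace FactorialJacobiTrudi

variable {R : Type*} [CommRing R]

section PowerSeries

lemma coeff_geom (x : R) (n : ℕ) : coeff n (geom x) = x ^ n := coeff_mk _ _

lemma one_sub_C_mul_X_mul_geom (x : R) : (1 - C x * X) * geom x = 1 := by
  ext n
  cases n with
  | zero => simp [geom]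
  | succ n =>
    rw [sub_mul, map_sub, one_mul, mul_assoc, mul_comm X, coeff_C_mul, coeff_succ_mul_X,
      coeff_geom, coeff_geom, coeff_one, pow_succ']
    simp

lemma C_mul_geom_sub_C_mul_geom (x y : R) :
    C x * geom x - C y * geom y = (C x - C y) * (geom x * geom y) := by
  linear_combination (C y * geom y) * one_sub_C_mul_X_mul_geom x -
    (C x * geom x) * one_sub_C_mul_X_mul_geom y

lemma coeff_mul_lin (f : PowerSeries R) (c : R) (n : ℕ) :
    coeff (n + 1) (f * lin c) = coeff (n + 1) f + c * coeff n f := by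
  rw [lin, mul_add, mul_one, mul_left_comm, map_add, coeff_C_mul, coeff_succ_mul_X]

lemma coeff_geom_mul_prod_lin (x : R) (a : ℕ → R) (m s : ℕ) :
    coeff (m + s) (geom x * ∏ k ∈ range m, lin (a (k + 1))) = x ^ s * factPow x a m := by
  induction m generalizing s with
  | zero => simp [factPow, coeff_geom]
  | succ m ih =>
    rw [prod_range_succ, ← mul_assoc, show m + 1 + s = m + s + 1 by omega, coeff_mul_lin,
      show m + s + 1 = m + (s + 1) by omega, ih, ih, factPow, factPow, prod_range_succ]
    ring

lemma mul_factPow_sub_mul_factPow (x y : R) (a : ℕ → R) (m : ℕ) :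
    x * factPow x a m - y * factPow y a m =
      (x - y) * coeff m (geom x * geom y * ∏ k ∈ range m, lin (a (k + 1))) := by
  set L := ∏ k ∈ range m, lin (a (k + 1))
  have hx : coeff m (geom x * L) = factPow x a m := by
    simpa using coeff_geom_mul_prod_lin x a m 0
  have hy : coeff m (geom y * L) = factPow y a m := by
    simpa using coeff_geom_mul_prod_lin y a m 0
  calc x * factPow x a m - y * factPow y a m = coeff m ((C x * geom x - C y * geom y) * L) := by
        rw [sub_mul, map_sub, mul_assoc, mul_assoc, coeff_C_mul, coeff_C_mul, hx, hy]
    _ = (x - y) * coeff m (geom x * geom y * L) := by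
        rw [C_mul_geom_sub_C_mul_geom, ← map_sub, mul_assoc, coeff_C_mul]

end PowerSeries

section Expansion

lemma prod_Ioc_eq_sum_prod_Ico (f : ℕ → R) {p n : ℕ} (hpn : p ≤ n) :
    ∏ r ∈ Ioc p n, f r = ∑ k ∈ Icc p n, (∏ ℓ ∈ Ioc k n, (f ℓ - f p)) * ∏ r ∈ Ico p k, f r := by
  induction n, hpn using Nat.le_induction with
  | base => simp
  | succ n hpn ih =>
    have hlast : ∏ r ∈ Ico p (n + 1), f r = f p * ∏ r ∈ Ioc p n, f r := by
      rw [Ico_add_one_right_eq_Icc, ← Ioc_insert_left hpn, prod_insert left_notMem_Ioc]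
    have hrest : ∀ k ∈ Icc p n, ∏ ℓ ∈ Ioc k (n + 1), (f ℓ - f p) =
        (∏ ℓ ∈ Ioc k n, (f ℓ - f p)) * (f (n + 1) - f p) :=
      fun k hk => prod_Ioc_succ_top (mem_Icc.mp hk).2 _
    rw [← insert_Icc_right_eq_Icc_add_one (by omega), sum_insert (by simp), Ioc_self,
      prod_empty, one_mul, hlast, sum_congr rfl fun k hk => by rw [hrest k hk],
      prod_Ioc_succ_top hpn, ih]
    simp only [mul_right_comm _ (f (n + 1) - f p), ← sum_mul]
    ring

lemma eq_sum_prod_Icc_of_mul_eq_one (f g : ℕ → R) (hfg : ∀ r, f r * g r = 1) {p n : ℕ}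
    (hpn : p ≤ n) :
    g p = ∑ k ∈ Icc p n, (∏ ℓ ∈ Ioc k n, (f ℓ - f p)) * ∏ r ∈ Icc k n, g r := by
  have hcancel : ∀ s : Finset ℕ, (∏ r ∈ s, f r) * ∏ r ∈ s, g r = 1 := fun s => by
    rw [← prod_mul_distrib, prod_eq_one fun r _ => hfg r]
  calc g p = (∏ r ∈ Ioc p n, f r) * ∏ r ∈ Icc p n, g r := by
        rw [← Ioc_insert_left hpn, prod_insert left_notMem_Ioc, mul_left_comm, hcancel, mul_one]
    _ = _ := by
        rw [prod_Ioc_eq_sum_prod_Ico f hpn, sum_mul]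
        refine sum_congr rfl fun k hk => ?_
        obtain ⟨hpk, hkn⟩ := mem_Icc.mp hk
        rw [← Ico_add_one_right_eq_Icc p, ← prod_Ico_consecutive _ hpk (by omega : k ≤ n + 1),
          Ico_add_one_right_eq_Icc, mul_assoc, ← mul_assoc (∏ r ∈ Ico p k, f r), hcancel, one_mul]

end Expansion

section Symplectic

variable (x xb a : ℕ → R)

lemma geom_mul_geom_eq_sum (hinv : ∀ ℓ, x ℓ * xb ℓ = 1) {p n : ℕ} (hpn : p ≤ n) :
    geom (x p) * geom (xb p) = ∑ k ∈ Icc p n,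
      C (∏ ℓ ∈ Ioc k n, (x p + xb p - (x ℓ + xb ℓ))) * X ^ (n - k) *
        ∏ r ∈ Icc k n, geom (x r) * geom (xb r) := by
  have hfg : ∀ r, (1 - C (x r) * X) * (1 - C (xb r) * X) * (geom (x r) * geom (xb r)) = 1 :=
    fun r => by rw [mul_mul_mul_comm, one_sub_C_mul_X_mul_geom, one_sub_C_mul_X_mul_geom, one_mul]
  have hC : ∀ r, C (x r) * C (xb r) = (1 : PowerSeries R) := fun r => by
    rw [← map_mul, hinv, map_one]
  have hdiff : ∀ ℓ, (1 - C (x ℓ) * X) * (1 - C (xb ℓ) * X) -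
      (1 - C (x p) * X) * (1 - C (xb p) * X) = C (x p + xb p - (x ℓ + xb ℓ)) * X := fun ℓ => by
    simp only [map_sub, map_add]
    linear_combination X ^ 2 * (hC ℓ - hC p)
  rw [eq_sum_prod_Icc_of_mul_eq_one _ _ hfg hpn]
  refine sum_congr rfl fun k _ => ?_
  rw [prod_congr rfl fun ℓ _ => hdiff ℓ, prod_mul_distrib, prod_const, Nat.card_Ioc, map_prod]

lemma coeff_X_pow_mul_eq_hsp {k n : ℕ} (hkn : k ≤ n) (m : ℕ) :
    coeff m (X ^ (n - k) * ((∏ r ∈ Icc k n, geom (x r) * geom (xb r)) *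
      ∏ i ∈ range m, lin (a (i + 1)))) = hsp x xb a k n ((m : ℤ) - n + k) := by
  rw [coeff_X_pow_mul', hsp]
  split_ifs with hle hneg hneg
  · omega
  · rw [show ((m : ℤ) - n + k).toNat = m - (n - k) by omega, show m - (n - k) + n - k = m by omega]
  · rfl
  · omega

lemma mul_factPow_sub_eq_sum_hsp (hinv : ∀ ℓ, x ℓ * xb ℓ = 1) {p n : ℕ} (hpn : p ≤ n) (m : ℕ) :
    x p * factPow (x p) a m - xb p * factPow (xb p) a m = ∑ k ∈ Icc p n,
      (x p - xb p) * (∏ ℓ ∈ Ioc k n, (x p + xb p - (x ℓ + xb ℓ))) *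
        hsp x xb a k n ((m : ℤ) - n + k) := by
  rw [mul_factPow_sub_mul_factPow, geom_mul_geom_eq_sum x xb hinv hpn, sum_mul, map_sum, mul_sum]
  refine sum_congr rfl fun k hk => ?_
  rw [mul_assoc (C _), mul_assoc (C _), mul_assoc (X ^ _), coeff_C_mul,
    coeff_X_pow_mul_eq_hsp x xb a (mem_Icc.mp hk).2, ← mul_assoc]

end Symplectic

section Matrix

lemma sum_Ici_fin_eq_sum_Icc {M : Type*} [AddCommMonoid M] {n : ℕ} (i : Fin n) (g : ℕ → M) :
    ∑ k ∈ Ici i, g ((k : ℕ) + 1) = ∑ q ∈ Icc ((i : ℕ) + 1) n, g q := by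
  rw [← Ico_add_one_right_eq_Icc, ← map_add_right_Ico, ← Fin.map_valEmbedding_Ici, map_map,
    sum_map]
  rfl

lemma prod_Ioi_fin_eq_prod_Ioc {M : Type*} [CommMonoid M] {n : ℕ} (i : Fin n) (g : ℕ → M) :
    ∏ k ∈ Ioi i, g ((k : ℕ) + 1) = ∏ q ∈ Ioc ((i : ℕ) + 1) n, g q := by
  rw [← Ioo_add_one_right_eq_Ioc, ← map_add_right_Ioo, ← Fin.map_valEmbedding_Ioi, map_map,
    prod_map]
  rfl

lemma add_sub_add_eq_sub_mul_one_sub_mul {x xb y yb : R} (hx : x * xb = 1) (hy : y * yb = 1) :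
    x + xb - (y + yb) = (x - y) * (1 - xb * yb) := by
  linear_combination yb * hx - xb * hy

variable (n : ℕ) (x xb a : ℕ → R)

def transitionMatrix : Matrix (Fin n) (Fin n) R :=
  Matrix.of fun i k => if i ≤ k then
    (x ((i : ℕ) + 1) - xb ((i : ℕ) + 1)) *
      ∏ ℓ ∈ Ioc ((k : ℕ) + 1) n, (x ((i : ℕ) + 1) + xb ((i : ℕ) + 1) - (x ℓ + xb ℓ))
  else 0

lemma det_transitionMatrix (hinv : ∀ ℓ, x ℓ * xb ℓ = 1) :
    (transitionMatrix n x xb).det = (∏ i : Fin n, (x ((i : ℕ) + 1) - xb ((i : ℕ) + 1))) *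
      ∏ i : Fin n, ∏ j ∈ Ioi i,
        (x ((i : ℕ) + 1) - x ((j : ℕ) + 1)) * (1 - xb ((i : ℕ) + 1) * xb ((j : ℕ) + 1)) := by
  have hupper : (transitionMatrix n x xb).IsUpperTriangular := fun _ _ hki =>
    if_neg (not_le.mpr hki)
  rw [Matrix.det_of_isUpperTriangular hupper, ← prod_mul_distrib]
  refine prod_congr rfl fun i _ => ?_
  simp only [transitionMatrix, Matrix.of_apply, le_refl, if_true, ← prod_Ioi_fin_eq_prod_Ioc]
  congr 1
  exact prod_congr rfl fun j _ => add_sub_add_eq_sub_mul_one_sub_mul (hinv _) (hinv _)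

lemma bialternantMatrix_eq_transitionMatrix_mul (hinv : ∀ ℓ, x ℓ * xb ℓ = 1) (lam : ℕ → ℕ) :
    Matrix.of (fun i j : Fin n =>
        x ((i : ℕ) + 1) * factPow (x ((i : ℕ) + 1)) a (lam ((j : ℕ) + 1) + (n - 1 - (j : ℕ)))
        - xb ((i : ℕ) + 1) *
            factPow (xb ((i : ℕ) + 1)) a (lam ((j : ℕ) + 1) + (n - 1 - (j : ℕ)))) =
      transitionMatrix n x xb * Matrix.of fun i j : Fin n =>
        hsp x xb a ((i : ℕ) + 1) n ((lam ((j : ℕ) + 1) : ℤ) - ((j : ℕ) + 1) + ((i : ℕ) + 1)) := by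
  ext i j
  rw [Matrix.mul_apply, Matrix.of_apply, mul_factPow_sub_eq_sum_hsp x xb a hinv i.isLt,
    ← sum_Ici_fin_eq_sum_Icc]
  simp only [transitionMatrix, Matrix.of_apply, ite_mul, zero_mul, ← sum_filter, filter_le_eq_Ici]
  refine sum_congr rfl fun k _ => ?_
  congr 2
  have hj := j.isLt
  push_cast
  omega

end Matrix

end FactorialJacobiTrudi

theorem stmt13_general {R : Type*} [CommRing R] (n : ℕ) (x xb a : ℕ → R)
    (hinv : ∀ ℓ, x ℓ * xb ℓ = 1) (lam : ℕ → ℕ) :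
    Matrix.det (Matrix.of fun i j : Fin n =>
        x ((i : ℕ) + 1) * factPow (x ((i : ℕ) + 1)) a (lam ((j : ℕ) + 1) + (n - 1 - (j : ℕ)))
        - xb ((i : ℕ) + 1) *
            factPow (xb ((i : ℕ) + 1)) a (lam ((j : ℕ) + 1) + (n - 1 - (j : ℕ)))) =
    (∏ i : Fin n, (x ((i : ℕ) + 1) - xb ((i : ℕ) + 1))) *
    (∏ i : Fin n, ∏ j ∈ Finset.Ioi i,
        (x ((i : ℕ) + 1) - x ((j : ℕ) + 1)) * (1 - xb ((i : ℕ) + 1) * xb ((j : ℕ) + 1))) *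
    Matrix.det (Matrix.of fun i j : Fin n =>
        hsp x xb a ((i : ℕ) + 1) n
          ((lam ((j : ℕ) + 1) : ℤ) - ((j : ℕ) + 1) + ((i : ℕ) + 1))) := by
  rw [FactorialJacobiTrudi.bialternantMatrix_eq_transitionMatrix_mul n x xb a hinv lam,
    Matrix.det_mul, FactorialJacobiTrudi.det_transitionMatrix n x xb hinv]

/-- Flagged factorial Jacobi–Trudi identity for factorial symplectic characters. -/
theorem stmt13 {R : Type*} [CommRing R] (n : ℕ) (x xb a : ℕ → R)
    (hinv : ∀ ℓ, x ℓ * xb ℓ = 1) (lam : ℕ → ℕ) (hlam : ∀ j, lam (j + 1) ≤ lam j) :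
    Matrix.det (Matrix.of fun i j : Fin n =>
        x ((i : ℕ) + 1) * factPow (x ((i : ℕ) + 1)) a (lam ((j : ℕ) + 1) + (n - 1 - (j : ℕ)))
        - xb ((i : ℕ) + 1) *
            factPow (xb ((i : ℕ) + 1)) a (lam ((j : ℕ) + 1) + (n - 1 - (j : ℕ)))) =
    (∏ i : Fin n, (x ((i : ℕ) + 1) - xb ((i : ℕ) + 1))) *
    (∏ i : Fin n, ∏ j ∈ Finset.Ioi i,
        (x ((i : ℕ) + 1) - x ((j : ℕ) + 1)) * (1 - xb ((i : ℕ) + 1) * xb ((j : ℕ) + 1))) *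
    Matrix.det (Matrix.of fun i j : Fin n =>
        hsp x xb a ((i : ℕ) + 1) n
          ((lam ((j : ℕ) + 1) : ℤ) - ((j : ℕ) + 1) + ((i : ℕ) + 1))) :=
  stmt13_general n x xb a hinv lam
end
end
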